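/- Let A be an m×n real matrix, H an n×n real matrix, v ∈ ℝ^m and w ∈ ℝ^n with δ = w ⬝ᵥ (H *ᵥ (Aᵀ *ᵥ v)) ≠ 0, and let H' = H - (1/δ) • vecMulVec (H *ᵥ (Aᵀ *ᵥ v)) (Hᵀ *ᵥ w). Then the range of the linear map x ↦ H'ᵀ *ᵥ x equals the intersection of the range of x ↦ Hᵀ *ᵥ x with the subspace {y ∈ ℝ^n : v ⬝ᵥ (A *ᵥ y) = 0}. -/

import Mathlib

open Matrix

/-!
With `δ = w ⬝ᵥ H *ᵥ u`, one has `H'ᵀ *ᵥ x = Hᵀ *ᵥ (x - δ⁻¹ ((H *ᵥ u) ⬝ᵥ x) • w)`, so the range of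
`H'ᵀ` lies in that of `Hᵀ`, and it is orthogonal to `u` because `u ⬝ᵥ Hᵀ *ᵥ w = δ`. Conversely,
`u ⬝ᵥ Hᵀ *ᵥ x = (H *ᵥ u) ⬝ᵥ x`, so if this vanishes the correction term vanishes and
`H'ᵀ *ᵥ x = Hᵀ *ᵥ x`.
-/

/-- The scaled ABS update, with `u` standing for `Aᵀ *ᵥ v`. -/
noncomputable def absUpdate {K m n : Type*} [Field K] [Fintype m] [Fintype n]
    (H : Matrix m n K) (u : n → K) (w : m → K) : Matrix m n K :=
  H - (w ⬝ᵥ (H *ᵥ u))⁻¹ • vecMulVec (H *ᵥ u) (Hᵀ *ᵥ w)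

namespace absUpdate

variable {K m n : Type*} [Field K] [Fintype m] [Fintype n]
  (H : Matrix m n K) (u : n → K) (w : m → K)

theorem transpose_mulVec (x : m → K) :
    (absUpdate H u w)ᵀ *ᵥ x = Hᵀ *ᵥ (x - ((w ⬝ᵥ (H *ᵥ u))⁻¹ * ((H *ᵥ u) ⬝ᵥ x)) • w) := by
  rw [absUpdate, transpose_sub, transpose_smul, transpose_vecMulVec, sub_mulVec, smul_mulVec,
    vecMulVec_mulVec, op_smul_eq_smul, smul_smul, mulVec_sub, mulVec_smul]

theorem transpose_mulVec_of_dotProduct_eq_zero {x : m → K} (hx : (H *ᵥ u) ⬝ᵥ x = 0) :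
    (absUpdate H u w)ᵀ *ᵥ x = Hᵀ *ᵥ x := by
  rw [transpose_mulVec, hx, mul_zero, zero_smul, sub_zero]

theorem dotProduct_transpose_mulVec (hδ : w ⬝ᵥ (H *ᵥ u) ≠ 0) (x : m → K) :
    u ⬝ᵥ ((absUpdate H u w)ᵀ *ᵥ x) = 0 := by
  have hT : ∀ y, u ⬝ᵥ (Hᵀ *ᵥ y) = (H *ᵥ u) ⬝ᵥ y := fun y => by
    rw [dotProduct_mulVec, vecMul_transpose]
  rw [transpose_mulVec, hT, dotProduct_sub, dotProduct_smul, dotProduct_comm _ w, smul_eq_mul,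
    mul_right_comm, inv_mul_cancel₀ hδ, one_mul, sub_self]

theorem range_transpose_mulVec (hδ : w ⬝ᵥ (H *ᵥ u) ≠ 0) :
    Set.range (absUpdate H u w)ᵀ.mulVec = Set.range Hᵀ.mulVec ∩ {y | u ⬝ᵥ y = 0} := by
  ext y
  constructor
  · rintro ⟨x, rfl⟩
    exact ⟨⟨_, (transpose_mulVec H u w x).symm⟩, dotProduct_transpose_mulVec H u w hδ x⟩
  · rintro ⟨⟨x, rfl⟩, hy⟩
    rw [Set.mem_ofPred_eq, dotProduct_mulVec, vecMul_transpose] at hy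
    exact ⟨x, transpose_mulVec_of_dotProduct_eq_zero H u w hy⟩

end absUpdate

theorem abs_update_range_transpose {m n : ℕ}
    (A : Matrix (Fin m) (Fin n) ℝ) (H : Matrix (Fin n) (Fin n) ℝ)
    (v : Fin m → ℝ) (w : Fin n → ℝ)
    (hδ : w ⬝ᵥ (H *ᵥ (Aᵀ *ᵥ v)) ≠ 0)
    (H' : Matrix (Fin n) (Fin n) ℝ)
    (hH' : H' = H - (1 / (w ⬝ᵥ (H *ᵥ (Aᵀ *ᵥ v)))) •
      vecMulVec (H *ᵥ (Aᵀ *ᵥ v)) (Hᵀ *ᵥ w)) :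
    Set.range (fun x : Fin n → ℝ => H'ᵀ *ᵥ x) =
      Set.range (fun x : Fin n → ℝ => Hᵀ *ᵥ x) ∩
        {y : Fin n → ℝ | v ⬝ᵥ (A *ᵥ y) = 0} := by
  have hH'abs : H' = absUpdate H (Aᵀ *ᵥ v) w := by rw [hH', one_div, absUpdate]
  have hvA : ∀ y, v ⬝ᵥ (A *ᵥ y) = (Aᵀ *ᵥ v) ⬝ᵥ y := fun y => by
    rw [dotProduct_mulVec, mulVec_transpose]
  simp only [hvA, hH'abs]
  exact absUpdate.range_transpose_mulVec H (Aᵀ *ᵥ v) w hδ
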